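/- Let p > 1 and 0 < m̄ ≤ M̄ < ∞. Define θ₂(ṽ, k, p) = (k−ṽ)^{p+1}/(p+1) − k(k−ṽ)^p/p + k^{p+1}/(p(p+1)). Then there exists C > 0 depending only on m̄, M̄, p such that for all k ∈ [m̄, M̄] and all ṽ with 0 ≤ ṽ ≤ k − m̄/2 (so that k − ṽ ≥ m̄/2 > 0), one has (1/2) k^{p-1} ṽ² − C ṽ³ ≤ θ₂(ṽ, k, p) ≤ (1/2) k^{p-1} ṽ². -/

import Mathlib

/-!
Both bounds come from comparing derivatives on `[0, v]`: `θ₂(·, k)` vanishes at `0` and has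
derivative `x (k - x)^(p-1)`, while the quadratic `k^(p-1) x² / 2` has derivative `k^(p-1) x`.
Since `(k - x)^(p-1) ≤ k^(p-1)` the upper bound follows. For the lower bound the defect
`k^q - (k - x)^q` (with `q = p - 1`) is at most `q k^q x / (k - x)`, by `t^q ≥ 1 + q log t` and
`log t ≥ 1 - 1/t`; as `k ≤ M` and `k - x ≥ m / 2`, this is `O(x)` uniformly, which costs a cubic.
-/

open Set Real

lemma rpow_sub_rpow_le_mul_sub {q a b : ℝ} (hq : 0 ≤ q) (ha : 0 < a) (hab : a ≤ b) :
    b ^ q - a ^ q ≤ q * b ^ q / a * (b - a) := by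
  have hb : 0 < b := ha.trans_le hab
  have hlog : 1 - b / a ≤ log (a / b) := by
    simpa [inv_div] using one_sub_inv_le_log_of_pos (div_pos ha hb)
  have hbq : 0 ≤ b ^ q := rpow_nonneg hb.le q
  calc b ^ q - a ^ q ≤ b ^ q - b ^ q * (1 + q * log (a / b)) := by
        gcongr
        calc b ^ q * (1 + q * log (a / b)) ≤ b ^ q * (a / b) ^ q := by
              gcongr
              rw [rpow_def_of_pos (div_pos ha hb)]
              linarith [add_one_le_exp (log (a / b) * q)]
          _ = a ^ q := by rw [div_rpow ha.le hb.le, mul_div_cancel₀ _ (rpow_pos_of_pos hb q).ne']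
    _ ≤ b ^ q - b ^ q * (1 + q * (1 - b / a)) := by gcongr
    _ = q * b ^ q / a * (b - a) := by field_simp; ring

lemma le_of_hasDerivAt_le {f g f' g' : ℝ → ℝ} {a b : ℝ} (hab : a ≤ b)
    (hf : ∀ x ∈ Icc a b, HasDerivAt f (f' x) x) (hg : ∀ x ∈ Icc a b, HasDerivAt g (g' x) x)
    (ha : f a ≤ g a) (hle : ∀ x ∈ Ico a b, f' x ≤ g' x) : f b ≤ g b :=
  image_le_of_deriv_right_le_deriv_boundary
    (fun x hx => (hf x hx).continuousAt.continuousWithinAt)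
    (fun x hx => (hf x (Ico_subset_Icc_self hx)).hasDerivWithinAt) ha
    (fun x hx => (hg x hx).continuousAt.continuousWithinAt)
    (fun x hx => (hg x (Ico_subset_Icc_self hx)).hasDerivWithinAt) hle (right_mem_Icc.2 hab)

noncomputable def theta2 (p k v : ℝ) : ℝ :=
  (k - v) ^ (p + 1) / (p + 1) - k * (k - v) ^ p / p + k ^ (p + 1) / (p * (p + 1))

section theta2

variable {p k : ℝ}

lemma theta2_zero (hp : p ≠ 0) (hp' : p + 1 ≠ 0) (hk : k ≠ 0) : theta2 p k 0 = 0 := by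
  rw [theta2, sub_zero, rpow_add_one hk]
  field_simp
  ring

lemma hasDerivAt_theta2 (hp : p ≠ 0) (hp' : p + 1 ≠ 0) {v : ℝ} (hv : v < k) :
    HasDerivAt (theta2 p k) (v * (k - v) ^ (p - 1)) v := by
  have hkv : k - v ≠ 0 := (sub_pos.2 hv).ne'
  have hsub : HasDerivAt (fun w : ℝ => k - w) (-1) v := by
    simpa using (hasDerivAt_id v).const_sub k
  have hpow (r : ℝ) : HasDerivAt (fun w : ℝ => (k - w) ^ r) (-1 * r * (k - v) ^ (r - 1)) v :=
    hsub.rpow_const (Or.inl hkv)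
  refine ((((hpow (p + 1)).div_const (p + 1)).sub (((hpow p).const_mul k).div_const p)).add_const
    (k ^ (p + 1) / (p * (p + 1)))).congr_deriv ?_
  have hsplit : (k - v) ^ p = (k - v) ^ (p - 1) * (k - v) := by
    rw [← rpow_add_one hkv, sub_add_cancel]
  rw [add_sub_cancel_right, hsplit]
  field_simp
  ring

lemma hasDerivAt_quadratic_sub_cubic (a c x : ℝ) :
    HasDerivAt (fun w : ℝ => a / 2 * w ^ 2 - c * w ^ 3) (a * x - 3 * c * x ^ 2) x := by
  refine (((hasDerivAt_pow 2 x).const_mul (a / 2)).sub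
    ((hasDerivAt_pow 3 x).const_mul c)).congr_deriv ?_
  norm_num
  ring

variable {v : ℝ}

lemma theta2_le (hp : 1 ≤ p) (hv : 0 ≤ v) (hvk : v < k) :
    theta2 p k v ≤ k ^ (p - 1) / 2 * v ^ 2 := by
  have hp0 : p ≠ 0 := by positivity
  have hp1 : p + 1 ≠ 0 := by positivity
  simpa using le_of_hasDerivAt_le hv (f := theta2 p k)
    (g := fun w => k ^ (p - 1) / 2 * w ^ 2 - 0 * w ^ 3)
    (fun x hx => hasDerivAt_theta2 hp0 hp1 (hx.2.trans_lt hvk))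
    (fun x _ => hasDerivAt_quadratic_sub_cubic _ _ x)
    (by simp [theta2_zero hp0 hp1 (hv.trans_lt hvk).ne'])
    (fun x hx => by
      have : (k - x) ^ (p - 1) ≤ k ^ (p - 1) :=
        rpow_le_rpow (by linarith [hx.2]) (by linarith [hx.1]) (by linarith)
      nlinarith [mul_le_mul_of_nonneg_left this hx.1])

lemma le_theta2 (hp : 1 ≤ p) (hv : 0 ≤ v) (hvk : v < k) :
    k ^ (p - 1) / 2 * v ^ 2 - (p - 1) * k ^ (p - 1) / (3 * (k - v)) * v ^ 3 ≤ theta2 p k v := by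
  have hp0 : p ≠ 0 := by positivity
  have hp1 : p + 1 ≠ 0 := by positivity
  have hkv : 0 < k - v := sub_pos.2 hvk
  refine le_of_hasDerivAt_le hv (fun x _ => hasDerivAt_quadratic_sub_cubic _ _ x)
    (fun x hx => hasDerivAt_theta2 hp0 hp1 (hx.2.trans_lt hvk))
    (by simp [theta2_zero hp0 hp1 (hv.trans_lt hvk).ne']) (fun x hx => ?_)
  have hkx : 0 < k - x := by linarith [hx.2]
  have hmvt := rpow_sub_rpow_le_mul_sub (sub_nonneg.2 hp) hkx (by linarith [hx.1] : k - x ≤ k)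
  have hcoef : (p - 1) * k ^ (p - 1) / (k - x) ≤ (p - 1) * k ^ (p - 1) / (k - v) :=
    div_le_div_of_nonneg_left (mul_nonneg (sub_nonneg.2 hp) (rpow_nonneg (hv.trans_lt hvk).le _))
      hkv (by linarith [hx.2])
  have hA : 3 * ((p - 1) * k ^ (p - 1) / (3 * (k - v))) = (p - 1) * k ^ (p - 1) / (k - v) := by
    field_simp
  rw [sub_sub_cancel] at hmvt
  rw [hA]
  nlinarith [mul_le_mul_of_nonneg_left (hmvt.trans (mul_le_mul_of_nonneg_right hcoef hx.1)) hx.1]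

end theta2

theorem stmt_6 (p : ℝ) (hp : 1 < p) (m M : ℝ) (hm : 0 < m) (hmM : m ≤ M) :
    ∃ C > 0, ∀ k ∈ Set.Icc m M, ∀ v : ℝ, 0 ≤ v → v ≤ k - m / 2 →
      (1 / 2) * k ^ (p - 1) * v ^ 2 - C * v ^ 3 ≤
          (k - v) ^ (p + 1) / (p + 1) - k * (k - v) ^ p / p + k ^ (p + 1) / (p * (p + 1)) ∧
        (k - v) ^ (p + 1) / (p + 1) - k * (k - v) ^ p / p + k ^ (p + 1) / (p * (p + 1)) ≤
          (1 / 2) * k ^ (p - 1) * v ^ 2 := by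
  have hq : 0 < p - 1 := sub_pos.2 hp
  refine ⟨(p - 1) * M ^ (p - 1) / m,
    div_pos (mul_pos hq (rpow_pos_of_pos (hm.trans_le hmM) _)) hm, ?_⟩
  rintro k ⟨hmk, hkM⟩ v hv hvk
  have hvk' : v < k := by linarith
  have hcoef : (p - 1) * k ^ (p - 1) / (3 * (k - v)) ≤ (p - 1) * M ^ (p - 1) / m := by
    refine div_le_div₀ (mul_nonneg hq.le (rpow_nonneg (hm.le.trans hmM) _)) ?_ hm (by linarith)
    exact mul_le_mul_of_nonneg_left (rpow_le_rpow (hm.le.trans hmk) hkM hq.le) hq.le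
  change _ ≤ theta2 p k v ∧ theta2 p k v ≤ _
  constructor
  · nlinarith [le_theta2 hp.le hv hvk', mul_le_mul_of_nonneg_right hcoef (pow_nonneg hv 3)]
  · linarith [theta2_le hp.le hv hvk']
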